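/- In the solvable Lie algebra 𝔰 with [e₀,eᵢ] = μᵢeᵢ and all eigenvalues positive, μ₁ ≤ ... ≤ μₙ, suppose μ₁ > 0. Then the Weyl connection defined by E = αe₀ is non-positive if and only if α ≤ μ₁. -/
import Mathlib


open scoped RealInnerProductSpace

/-- The Weyl sectional curvature on the solvable extension `𝔰` (orthonormal basis
`e₀,…,eₙ`, `[e₀,eᵢ] = μᵢeᵢ`, `[eᵢ,eⱼ] = 0` for `i,j ≥ 1`) for the Weyl connection defined
by `E = α e₀`, expressed in the Plücker coordinates `m_{ij} = xᵢyⱼ − xⱼyᵢ` of an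
orthonormal frame `(X,Y)`:
`K̂(X,Y) = Σ_{k>0} μₖ(α − μₖ)m_{0k}² − Σ_{0<i<j} (α−μᵢ)(α−μⱼ)m_{ij}²`. -/
noncomputable def solvWeylK (n : ℕ) (μ : Fin (n + 1) → ℝ) (α : ℝ)
    (X Y : EuclideanSpace ℝ (Fin (n + 1))) : ℝ :=
  (∑ k ∈ Finset.univ.erase (0 : Fin (n + 1)),
      μ k * (α - μ k) * (X 0 * Y k - X k * Y 0) ^ 2)
    - ∑ i ∈ Finset.univ.erase (0 : Fin (n + 1)),
        ∑ j ∈ Finset.univ.erase (0 : Fin (n + 1)),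
          if i < j then (α - μ i) * (α - μ j) * (X i * Y j - X j * Y i) ^ 2 else 0

/-- In the solvable Lie algebra `𝔰` with `[e₀,eᵢ] = μᵢeᵢ` and all eigenvalues positive,
ordered `0 < μ₁ ≤ … ≤ μₙ`, the Weyl connection defined by `E = α e₀` is non-positive if
and only if `α ≤ μ₁`. -/
theorem solv_weyl_nonpositive_iff_positive_case (n : ℕ) (hn : 1 ≤ n)
    (μ : Fin (n + 1) → ℝ) (hμ0 : μ 0 = 0)
    (hpos : ∀ i : Fin (n + 1), i ≠ 0 → 0 < μ i)
    (hmono : ∀ i j : Fin (n + 1), i ≠ 0 → i ≤ j → μ i ≤ μ j) (α : ℝ) :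
    (∀ X Y : EuclideanSpace ℝ (Fin (n + 1)),
        ⟪X, X⟫ = 1 → ⟪Y, Y⟫ = 1 → ⟪X, Y⟫ = 0 → solvWeylK n μ α X Y ≤ 0) ↔
      α ≤ μ 1 := by
  obtain ⟨m, rfl⟩ : ∃ m, n = m + 1 := ⟨n - 1, by omega⟩
  have hone : (1 : Fin (m + 2)) ≠ 0 := one_ne_zero
  constructor
  · intro h
    by_contra hlt
    push_neg at hlt
    set X : EuclideanSpace ℝ (Fin (m + 2)) := EuclideanSpace.single 0 1 with hXdef
    set Y : EuclideanSpace ℝ (Fin (m + 2)) := EuclideanSpace.single 1 1 with hYdef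
    have hX : ∀ i, X i = if i = 0 then 1 else 0 := by
      intro i; simp [hXdef, EuclideanSpace.single_apply]
    have hY : ∀ i, Y i = if i = 1 then 1 else 0 := by
      intro i; simp [hYdef, EuclideanSpace.single_apply]
    have hK := h X Y
      (by simp [hXdef, EuclideanSpace.inner_single_left, EuclideanSpace.single_apply])
      (by simp [hYdef, EuclideanSpace.inner_single_left, EuclideanSpace.single_apply])
      (by simp [hXdef, hYdef, EuclideanSpace.inner_single_left, EuclideanSpace.single_apply,
        hone.symm])
    unfold solvWeylK at hK
    have h1 : (∑ k ∈ Finset.univ.erase (0 : Fin (m + 2)),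
        μ k * (α - μ k) * (X 0 * Y k - X k * Y 0) ^ 2) = μ 1 * (α - μ 1) := by
      rw [Finset.sum_eq_single_of_mem (1 : Fin (m + 2)) (by simp [hone])]
      · simp [hX, hY, hone]
      · intro k hk hk1
        have hk0 : k ≠ 0 := (Finset.mem_erase.mp hk).1
        simp [hX, hY, hk0, hk1]
    have h2 : (∑ i ∈ Finset.univ.erase (0 : Fin (m + 2)),
        ∑ j ∈ Finset.univ.erase (0 : Fin (m + 2)),
          if i < j then (α - μ i) * (α - μ j) * (X i * Y j - X j * Y i) ^ 2 else 0) = 0 := by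
      apply Finset.sum_eq_zero
      intro i hi
      apply Finset.sum_eq_zero
      intro j hj
      have hi0 : i ≠ 0 := (Finset.mem_erase.mp hi).1
      have hj0 : j ≠ 0 := (Finset.mem_erase.mp hj).1
      simp [hX, hY, hi0, hj0]
    rw [h1, h2] at hK
    have hμ1 : 0 < μ 1 := hpos 1 hone
    nlinarith
  · intro hα X Y _ _ _
    unfold solvWeylK
    have h1 : (∑ k ∈ Finset.univ.erase (0 : Fin (m + 2)),
        μ k * (α - μ k) * (X 0 * Y k - X k * Y 0) ^ 2) ≤ 0 := by
      apply Finset.sum_nonpos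
      intro k hk
      have hk0 : k ≠ 0 := (Finset.mem_erase.mp hk).1
      have h1k : (1 : Fin (m + 2)) ≤ k := by
        rw [Fin.le_def, Fin.val_one]
        have := Fin.pos_of_ne_zero hk0
        omega
      have hμk : α ≤ μ k := le_trans hα (hmono 1 k hone h1k)
      have := hpos k hk0
      have hfac : μ k * (α - μ k) ≤ 0 := mul_nonpos_of_nonneg_of_nonpos this.le (by linarith)
      exact mul_nonpos_of_nonpos_of_nonneg hfac (sq_nonneg _)
    have h2 : (0 : ℝ) ≤ ∑ i ∈ Finset.univ.erase (0 : Fin (m + 2)),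
        ∑ j ∈ Finset.univ.erase (0 : Fin (m + 2)),
          if i < j then (α - μ i) * (α - μ j) * (X i * Y j - X j * Y i) ^ 2 else 0 := by
      apply Finset.sum_nonneg; intro i hi
      apply Finset.sum_nonneg; intro j hj
      have hi0 : i ≠ 0 := (Finset.mem_erase.mp hi).1
      have hj0 : j ≠ 0 := (Finset.mem_erase.mp hj).1
      split
      · have h1i : (1 : Fin (m + 2)) ≤ i := by
          rw [Fin.le_def, Fin.val_one]; have := Fin.pos_of_ne_zero hi0; omega
        have h1j : (1 : Fin (m + 2)) ≤ j := by
          rw [Fin.le_def, Fin.val_one]; have := Fin.pos_of_ne_zero hj0; omega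
        have hi' : α - μ i ≤ 0 := by linarith [hmono 1 i hone h1i]
        have hj' : α - μ j ≤ 0 := by linarith [hmono 1 j hone h1j]
        have hprod : 0 ≤ (α - μ i) * (α - μ j) := by nlinarith
        exact mul_nonneg hprod (sq_nonneg _)
      · exact le_rfl
    linarith
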